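/- arXiv:1811.07307 — 7 statements merged into one kernel-verified Lean document; each statement's English description precedes it below -/
import Mathlib

section
/- For ε ∈ (0,1), the Chernoff information between the Bernoulli distributions with parameters (1-ε)/2 and (1+ε)/2 equals -log(√(1-ε²)). That is, min over λ ∈ [0,1] of log(((1-ε)/2)^λ·((1+ε)/2)^(1-λ) + ((1+ε)/2)^λ·((1-ε)/2)^(1-λ)) equals log(√(1-ε²)), attained at λ = 1/2. -/
theorem chernoff_symmetric_bernoulli (ε : ℝ) (hε0 : 0 < ε) (hε1 : ε < 1) :
    IsLeast
      ((fun l : ℝ => Real.log (((1 - ε) / 2) ^ l * ((1 + ε) / 2) ^ (1 - l)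
          + ((1 + ε) / 2) ^ l * ((1 - ε) / 2) ^ (1 - l))) '' Set.Icc 0 1)
      (Real.log (Real.sqrt (1 - ε ^ 2))) ∧
    Real.log (((1 - ε) / 2) ^ ((1:ℝ)/2) * ((1 + ε) / 2) ^ (1 - (1:ℝ)/2)
          + ((1 + ε) / 2) ^ ((1:ℝ)/2) * ((1 - ε) / 2) ^ (1 - (1:ℝ)/2))
      = Real.log (Real.sqrt (1 - ε ^ 2)) := by
  have ha : (0:ℝ) < (1 - ε) / 2 := by linarith
  have hb : (0:ℝ) < (1 + ε) / 2 := by linarith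
  have h1 : (0:ℝ) < 1 - ε ^ 2 := by nlinarith
  have hab : ((1 - ε) / 2) * ((1 + ε) / 2) = (1 - ε ^ 2) / 4 := by ring
  have hsqrt4 : Real.sqrt ((1 - ε ^ 2) / 4) = Real.sqrt (1 - ε ^ 2) / 2 := by
    rw [show (1 - ε ^ 2) / 4 = (1 - ε ^ 2) / 2 ^ 2 by ring,
      Real.sqrt_div h1.le, Real.sqrt_sq (by norm_num : (0:ℝ) ≤ 2)]
  -- value at 1/2
  have hhalf : ((1 - ε) / 2) ^ ((1:ℝ)/2) * ((1 + ε) / 2) ^ (1 - (1:ℝ)/2)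
          + ((1 + ε) / 2) ^ ((1:ℝ)/2) * ((1 - ε) / 2) ^ (1 - (1:ℝ)/2)
      = Real.sqrt (1 - ε ^ 2) := by
    have h12 : (1 - (1:ℝ)/2) = (1:ℝ)/2 := by norm_num
    rw [h12, ← Real.sqrt_eq_rpow, ← Real.sqrt_eq_rpow, ← Real.sqrt_mul ha.le,
      ← Real.sqrt_mul hb.le, mul_comm ((1 + ε) / 2), hab, hsqrt4]
    ring
  -- lower bound
  have hlb : ∀ l ∈ Set.Icc (0:ℝ) 1,
      Real.sqrt (1 - ε ^ 2) ≤ ((1 - ε) / 2) ^ l * ((1 + ε) / 2) ^ (1 - l)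
          + ((1 + ε) / 2) ^ l * ((1 - ε) / 2) ^ (1 - l) := by
    intro l _
    set x := ((1 - ε) / 2) ^ l * ((1 + ε) / 2) ^ (1 - l) with hx
    set y := ((1 + ε) / 2) ^ l * ((1 - ε) / 2) ^ (1 - l) with hy
    have hxpos : 0 < x := mul_pos (Real.rpow_pos_of_pos ha l) (Real.rpow_pos_of_pos hb _)
    have hypos : 0 < y := mul_pos (Real.rpow_pos_of_pos hb l) (Real.rpow_pos_of_pos ha _)
    have hxy : x * y = (1 - ε ^ 2) / 4 := by
      rw [hx, hy, ← hab]
      have e1 : ((1 - ε) / 2) ^ l * ((1 - ε) / 2) ^ (1 - l) = (1 - ε) / 2 := by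
        rw [← Real.rpow_add ha]; norm_num
      have e2 : ((1 + ε) / 2) ^ l * ((1 + ε) / 2) ^ (1 - l) = (1 + ε) / 2 := by
        rw [← Real.rpow_add hb]; norm_num
      calc ((1 - ε) / 2) ^ l * ((1 + ε) / 2) ^ (1 - l) *
            (((1 + ε) / 2) ^ l * ((1 - ε) / 2) ^ (1 - l))
          = (((1 - ε) / 2) ^ l * ((1 - ε) / 2) ^ (1 - l)) *
            (((1 + ε) / 2) ^ l * ((1 + ε) / 2) ^ (1 - l)) := by ring
        _ = (1 - ε) / 2 * ((1 + ε) / 2) := by rw [e1, e2]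
    have hsx := Real.sq_sqrt hxpos.le
    have hsy := Real.sq_sqrt hypos.le
    have hsm : Real.sqrt (x * y) = Real.sqrt x * Real.sqrt y := Real.sqrt_mul hxpos.le y
    have hamgm : 2 * Real.sqrt (x * y) ≤ x + y := by
      nlinarith [sq_nonneg (Real.sqrt x - Real.sqrt y)]
    have : Real.sqrt (x * y) = Real.sqrt (1 - ε ^ 2) / 2 := by rw [hxy, hsqrt4]
    linarith [hamgm, this ▸ hamgm]
  have hspos : 0 < Real.sqrt (1 - ε ^ 2) := Real.sqrt_pos.mpr h1
  refine ⟨⟨⟨1/2, by norm_num, by simp only []; rw [hhalf]⟩, ?_⟩, by rw [hhalf]⟩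
  rintro v ⟨l, hl, rfl⟩
  exact Real.log_le_log hspos (hlb l hl)
end

section
/- For fixed p ∈ [0,1) and λ ∈ [0,1], the function h(δ) = p^λ(p+δ)^(1-λ) + (1-p)^λ(1-p-δ)^(1-λ) is nonincreasing in δ on the interval where 0 ≤ δ ≤ 1-p, i.e., its derivative with respect to δ is nonpositive. -/
/-- Tangent-line bound for rpow, from weighted AM-GM. -/
lemma tangent_bound_rpow (c l u v : ℝ) (hc : 0 ≤ c) (hl : 0 ≤ l) (hcl : c + l = 1)
    (hu : 0 < u) (hv : 0 ≤ v) : v ^ c ≤ u ^ c * (c * (v / u) + l) := by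
  have h1 : (v / u) ^ c * (1 : ℝ) ^ l ≤ c * (v / u) + l * 1 :=
    Real.geom_mean_le_arith_mean2_weighted hc hl (by positivity) zero_le_one hcl
  rw [Real.one_rpow, mul_one, mul_one] at h1
  have h2 : v ^ c = u ^ c * (v / u) ^ c := by
    rw [← Real.mul_rpow hu.le (by positivity), mul_comm, div_mul_cancel₀ _ hu.ne']
  rw [h2]
  exact mul_le_mul_of_nonneg_left h1 (Real.rpow_nonneg hu.le c)

theorem chernoff_coefficient_antitone_in_gap (p l : ℝ) (hp0 : 0 ≤ p) (hp1 : p < 1)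
    (hl0 : 0 ≤ l) (hl1 : l ≤ 1) :
    AntitoneOn (fun δ : ℝ => p ^ l * (p + δ) ^ (1 - l) + (1 - p) ^ l * (1 - p - δ) ^ (1 - l))
      (Set.Icc 0 (1 - p)) := by
  rcases eq_or_lt_of_le hp0 with hp | hp
  · -- p = 0
    subst hp
    intro x hx y hy hxy
    dsimp only
    rcases eq_or_lt_of_le hl0 with hl | hl
    · subst hl
      norm_num
    · rw [Real.zero_rpow hl.ne', zero_mul, zero_mul, zero_add, zero_add]
      have hy1 : y ≤ 1 - 0 := hy.2
      exact mul_le_mul_of_nonneg_left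
        (Real.rpow_le_rpow (by linarith) (by linarith [hxy]) (by linarith))
        (Real.rpow_nonneg (by norm_num) l)
  · -- 0 < p
    intro x hx y hy hxy
    dsimp only
    rcases eq_or_lt_of_le hxy with rfl | hxy
    · exact le_refl _
    · obtain ⟨hx0, hx1⟩ := hx
      obtain ⟨hy0, hy1⟩ := hy
      set q : ℝ := 1 - p with hq
      have hq0 : 0 < q := by simp [hq]; linarith
      have ha : 0 < p + x := by linarith
      have ha' : 0 < p + y := by linarith
      have hb : 0 < 1 - p - x := by linarith
      have hb' : 0 ≤ 1 - p - y := by linarith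
      have hc : 0 ≤ 1 - l := by linarith
      have hA := tangent_bound_rpow (1 - l) l (p + x) (p + y) hc hl0 (by ring) ha ha'.le
      have hB := tangent_bound_rpow (1 - l) l (1 - p - x) (1 - p - y) hc hl0 (by ring) hb hb'
      have s1 : p ^ l * (p + y) ^ (1 - l) ≤
          p ^ l * ((p + x) ^ (1 - l) * ((1 - l) * ((p + y) / (p + x)) + l)) :=
        mul_le_mul_of_nonneg_left hA (Real.rpow_nonneg hp0 l)
      have s2 : q ^ l * (1 - p - y) ^ (1 - l) ≤
          q ^ l * ((1 - p - x) ^ (1 - l) * ((1 - l) * ((1 - p - y) / (1 - p - x)) + l)) :=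
        mul_le_mul_of_nonneg_left hB (Real.rpow_nonneg hq0.le l)
      -- key ratio inequality
      have hacl : (p + x) ^ (1 - l) * (p + x) ^ l = p + x := by
        rw [← Real.rpow_add ha]; norm_num
      have hbcl : (1 - p - x) ^ (1 - l) * (1 - p - x) ^ l = 1 - p - x := by
        rw [← Real.rpow_add hb]; norm_num
      have hmul : p ^ l * (1 - p - x) ^ l ≤ q ^ l * (p + x) ^ l := by
        rw [← Real.mul_rpow hp0 hb.le, ← Real.mul_rpow hq0.le ha.le]
        exact Real.rpow_le_rpow (by positivity) (by simp only [hq]; nlinarith) hl0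
      have key : p ^ l * (p + x) ^ (1 - l) / (p + x) ≤
          q ^ l * (1 - p - x) ^ (1 - l) / (1 - p - x) := by
        rw [div_le_div_iff₀ ha hb]
        calc p ^ l * (p + x) ^ (1 - l) * (1 - p - x)
            = (p ^ l * (1 - p - x) ^ l) * ((p + x) ^ (1 - l) * (1 - p - x) ^ (1 - l)) := by
              linear_combination p ^ l * (p + x) ^ (1 - l) * hbcl.symm
          _ ≤ (q ^ l * (p + x) ^ l) * ((p + x) ^ (1 - l) * (1 - p - x) ^ (1 - l)) :=
              mul_le_mul_of_nonneg_right hmul (by positivity)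
          _ = q ^ l * (1 - p - x) ^ (1 - l) * (p + x) := by
              linear_combination q ^ l * (1 - p - x) ^ (1 - l) * hacl
      have e1 : p ^ l * ((p + x) ^ (1 - l) * ((1 - l) * ((p + y) / (p + x)) + l)) =
          p ^ l * (p + x) ^ (1 - l) +
            (1 - l) * (y - x) * (p ^ l * (p + x) ^ (1 - l) / (p + x)) := by
        field_simp
        ring
      have e2 : q ^ l * ((1 - p - x) ^ (1 - l) * ((1 - l) * ((1 - p - y) / (1 - p - x)) + l)) =
          q ^ l * (1 - p - x) ^ (1 - l) -
            (1 - l) * (y - x) * (q ^ l * (1 - p - x) ^ (1 - l) / (1 - p - x)) := by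
        field_simp
        ring
      have hkey2 : (1 - l) * (y - x) * (p ^ l * (p + x) ^ (1 - l) / (p + x)) ≤
          (1 - l) * (y - x) * (q ^ l * (1 - p - x) ^ (1 - l) / (1 - p - x)) :=
        mul_le_mul_of_nonneg_left key (by nlinarith)
      linarith [s1, s2]
end

section
/- Among all pairs of Bernoulli distributions with parameters p < q satisfying q - p = ε (ε ∈ (0,1) fixed), the Chernoff information C_br(p,q) is minimized at p = (1-ε)/2, q = (1+ε)/2, i.e., C_br(p,q) ≥ C_br((1-ε)/2, (1+ε)/2) for all such pairs. -/
lemma key_sqrt_ineq (p ε : ℝ) (hε0 : 0 < ε) (hε1 : ε < 1) (hp0 : 0 ≤ p)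
    (hp1 : p + ε ≤ 1) :
    Real.sqrt (p * (p + ε)) + Real.sqrt ((1 - p) * (1 - (p + ε))) ≤
      Real.sqrt (1 - ε ^ 2) := by
  set x := Real.sqrt (p * (p + ε)) with hxdef
  set y := Real.sqrt ((1 - p) * (1 - (p + ε))) with hydef
  have hA : 0 ≤ p * (p + ε) := mul_nonneg hp0 (by linarith)
  have hB : 0 ≤ (1 - p) * (1 - (p + ε)) := mul_nonneg (by linarith) (by linarith)
  have hx0 : 0 ≤ x := Real.sqrt_nonneg _
  have hy0 : 0 ≤ y := Real.sqrt_nonneg _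
  have hx2 : x ^ 2 = p * (p + ε) := Real.sq_sqrt hA
  have hy2 : y ^ 2 = (1 - p) * (1 - (p + ε)) := Real.sq_sqrt hB
  have hxy : x * y ≤ p * (1 - p - ε) + (ε - ε ^ 2) / 2 := by
    have h1 : x * y = Real.sqrt (p * (p + ε) * ((1 - p) * (1 - (p + ε)))) :=
      (Real.sqrt_mul hA _).symm
    have h2 : p * (p + ε) * ((1 - p) * (1 - (p + ε))) ≤
        (p * (1 - p - ε) + (ε - ε ^ 2) / 2) ^ 2 := by
      nlinarith [mul_nonneg (sq_nonneg ε) (sq_nonneg (1 - ε - 2 * p)), sq_nonneg (1 - ε - 2 * p)]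
    have h3 : 0 ≤ p * (1 - p - ε) + (ε - ε ^ 2) / 2 := by
      have := mul_nonneg hp0 (show (0:ℝ) ≤ 1 - p - ε by linarith)
      nlinarith
    calc x * y = Real.sqrt (p * (p + ε) * ((1 - p) * (1 - (p + ε)))) := h1
      _ ≤ Real.sqrt ((p * (1 - p - ε) + (ε - ε ^ 2) / 2) ^ 2) := Real.sqrt_le_sqrt h2
      _ = p * (1 - p - ε) + (ε - ε ^ 2) / 2 := Real.sqrt_sq h3
  have hsum2 : (x + y) ^ 2 ≤ 1 - ε ^ 2 := by nlinarith
  calc x + y = Real.sqrt ((x + y) ^ 2) := (Real.sqrt_sq (by linarith)).symm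
    _ ≤ Real.sqrt (1 - ε ^ 2) := Real.sqrt_le_sqrt hsum2

lemma rpow_ge_self_aux {x : ℝ} (hx0 : 0 ≤ x) (hx1 : x ≤ 1) {l : ℝ} (hl : l ≤ 1) :
    x ≤ x ^ l := by
  rcases eq_or_lt_of_le hx0 with h | h
  · rw [← h]; exact Real.rpow_nonneg le_rfl l
  · calc x = x ^ (1:ℝ) := (Real.rpow_one x).symm
      _ ≤ x ^ l := Real.rpow_le_rpow_of_exponent_ge h hx1 hl

theorem chernoff_min_at_symmetric_pair (p q ε : ℝ) (hε0 : 0 < ε) (hε1 : ε < 1)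
    (hp0 : 0 ≤ p) (hq1 : q ≤ 1) (hq : q = p + ε) :
    -sInf ((fun l : ℝ => Real.log (((1 - ε) / 2) ^ l * ((1 + ε) / 2) ^ (1 - l)
          + ((1 + ε) / 2) ^ l * ((1 - ε) / 2) ^ (1 - l))) '' Set.Icc 0 1) ≤
    -sInf ((fun l : ℝ => Real.log (p ^ l * q ^ (1 - l)
          + (1 - p) ^ l * (1 - q) ^ (1 - l))) '' Set.Icc 0 1) := by
  have hq0 : 0 < q := by rw [hq]; linarith
  have hp1 : p ≤ 1 := by linarith [hq ▸ hq1]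
  have hpe : p + ε ≤ 1 := hq ▸ hq1
  have hq1' : 1 - q ≤ 1 := by linarith
  have hq0' : 0 ≤ 1 - q := by linarith
  have hp0' : 0 ≤ 1 - p := by linarith
  have hp1' : 1 - p ≤ 1 := by linarith
  set a := (1 - ε) / 2 with ha
  set b := (1 + ε) / 2 with hb
  have ha0 : 0 < a := by rw [ha]; linarith
  have hb0 : 0 < b := by rw [hb]; linarith
  have hε2 : 0 < 1 - ε ^ 2 := by nlinarith
  -- the positive lower bound for the general expression
  have hlow : 0 < p * q + (1 - p) * (1 - q) := by
    rcases eq_or_lt_of_le hp0 with h | h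
    · have : 1 - q = 1 - ε := by rw [hq, ← h]; ring
      rw [← h]; rw [this]; nlinarith
    · have h1 : 0 < p * q := mul_pos h hq0
      have h2 : 0 ≤ (1 - p) * (1 - q) := mul_nonneg hp0' hq0'
      linarith
  -- each general value is bounded below
  have hbdd : ∀ l ∈ Set.Icc (0:ℝ) 1,
      Real.log (p * q + (1 - p) * (1 - q)) ≤
        Real.log (p ^ l * q ^ (1 - l) + (1 - p) ^ l * (1 - q) ^ (1 - l)) := by
    intro l hl
    obtain ⟨hl0, hl1⟩ := hl
    have e1 : p * q ≤ p ^ l * q ^ (1 - l) :=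
      mul_le_mul (rpow_ge_self_aux hp0 hp1 hl1) (rpow_ge_self_aux (le_of_lt hq0) hq1 (by linarith))
        (le_of_lt hq0) (Real.rpow_nonneg hp0 l)
    have e2 : (1 - p) * (1 - q) ≤ (1 - p) ^ l * (1 - q) ^ (1 - l) :=
      mul_le_mul (rpow_ge_self_aux hp0' hp1' hl1) (rpow_ge_self_aux hq0' hq1' (by linarith))
        hq0' (Real.rpow_nonneg hp0' l)
    exact Real.log_le_log hlow (by linarith)
  have hBddBelow : BddBelow ((fun l : ℝ => Real.log (p ^ l * q ^ (1 - l)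
          + (1 - p) ^ l * (1 - q) ^ (1 - l))) '' Set.Icc 0 1) := by
    refine ⟨Real.log (p * q + (1 - p) * (1 - q)), ?_⟩
    rintro v ⟨l, hl, rfl⟩
    exact hbdd l hl
  -- step 1 : sInf general ≤ value at 1/2
  have hhalf : ((1:ℝ)/2) ∈ Set.Icc (0:ℝ) 1 := by norm_num
  have step1 : sInf ((fun l : ℝ => Real.log (p ^ l * q ^ (1 - l)
          + (1 - p) ^ l * (1 - q) ^ (1 - l))) '' Set.Icc 0 1) ≤
      Real.log (p ^ ((1:ℝ)/2) * q ^ (1 - (1:ℝ)/2)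
          + (1 - p) ^ ((1:ℝ)/2) * (1 - q) ^ (1 - (1:ℝ)/2)) :=
    csInf_le hBddBelow ⟨(1:ℝ)/2, hhalf, rfl⟩
  -- rewrite the value at 1/2 with square roots
  have hval : p ^ ((1:ℝ)/2) * q ^ (1 - (1:ℝ)/2)
          + (1 - p) ^ ((1:ℝ)/2) * (1 - q) ^ (1 - (1:ℝ)/2)
        = Real.sqrt (p * q) + Real.sqrt ((1 - p) * (1 - q)) := by
    have h12 : (1 : ℝ) - 1/2 = 1/2 := by norm_num
    rw [h12, ← Real.sqrt_eq_rpow, ← Real.sqrt_eq_rpow, ← Real.sqrt_eq_rpow,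
      ← Real.sqrt_eq_rpow, ← Real.sqrt_mul hp0, ← Real.sqrt_mul hp0']
  -- step 2 : value at 1/2 ≤ log √(1-ε²)
  have hsq_pos : 0 < Real.sqrt (p * q) + Real.sqrt ((1 - p) * (1 - q)) := by
    rcases eq_or_lt_of_le hp0 with h | h
    · have : 0 < (1 - p) * (1 - q) := by rw [← h, hq, ← h]; norm_num; linarith
      have := Real.sqrt_pos.mpr this
      have := Real.sqrt_nonneg (p * q)
      linarith
    · have := Real.sqrt_pos.mpr (mul_pos h hq0)
      have := Real.sqrt_nonneg ((1 - p) * (1 - q))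
      linarith
  have hkey : Real.sqrt (p * q) + Real.sqrt ((1 - p) * (1 - q)) ≤ Real.sqrt (1 - ε ^ 2) := by
    have := key_sqrt_ineq p ε hε0 hε1 hp0 hpe
    rw [hq]; exact this
  have step2 : Real.log (Real.sqrt (p * q) + Real.sqrt ((1 - p) * (1 - q)))
      ≤ Real.log (Real.sqrt (1 - ε ^ 2)) := Real.log_le_log hsq_pos hkey
  -- step 3 : log √(1-ε²) is a lower bound for the symmetric set
  have hab : a * b = (1 - ε ^ 2) / 4 := by rw [ha, hb]; ring
  have h2ab : 2 * Real.sqrt (a * b) = Real.sqrt (1 - ε ^ 2) := by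
    rw [hab]
    rw [show (1 - ε ^ 2) / 4 = (1 - ε ^ 2) * (1/2) ^ 2 by ring,
      Real.sqrt_mul (le_of_lt hε2), Real.sqrt_sq (by norm_num : (0:ℝ) ≤ 1/2)]
    ring
  have step3 : Real.log (Real.sqrt (1 - ε ^ 2)) ≤
      sInf ((fun l : ℝ => Real.log (a ^ l * b ^ (1 - l) + b ^ l * a ^ (1 - l))) '' Set.Icc 0 1) := by
    apply le_csInf ⟨_, Set.mem_image_of_mem _ hhalf⟩
    rintro v ⟨l, hl, rfl⟩
    have hu : 0 ≤ a ^ l * b ^ (1 - l) :=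
      mul_nonneg (Real.rpow_nonneg ha0.le l) (Real.rpow_nonneg hb0.le _)
    have hv : 0 ≤ b ^ l * a ^ (1 - l) :=
      mul_nonneg (Real.rpow_nonneg hb0.le l) (Real.rpow_nonneg ha0.le _)
    have hprod : a ^ l * b ^ (1 - l) * (b ^ l * a ^ (1 - l)) = a * b := by
      have e1 : a ^ l * a ^ (1 - l) = a := by
        rw [← Real.rpow_add ha0]; norm_num
      have e2 : b ^ l * b ^ (1 - l) = b := by
        rw [← Real.rpow_add hb0]; norm_num
      calc a ^ l * b ^ (1 - l) * (b ^ l * a ^ (1 - l))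
          = (a ^ l * a ^ (1 - l)) * (b ^ l * b ^ (1 - l)) := by ring
        _ = a * b := by rw [e1, e2]
    -- AM-GM : 2√(uv) ≤ u + v
    have hamgm : 2 * Real.sqrt (a * b) ≤ a ^ l * b ^ (1 - l) + b ^ l * a ^ (1 - l) := by
      set u := a ^ l * b ^ (1 - l)
      set v := b ^ l * a ^ (1 - l)
      have h1 : Real.sqrt (a * b) = Real.sqrt (u * v) := by rw [hprod]
      have h2 : u * v ≤ ((u + v) / 2) ^ 2 := by nlinarith [sq_nonneg (u - v)]
      have h3 : Real.sqrt (u * v) ≤ (u + v) / 2 := by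
        calc Real.sqrt (u * v) ≤ Real.sqrt (((u + v) / 2) ^ 2) := Real.sqrt_le_sqrt h2
          _ = (u + v) / 2 := Real.sqrt_sq (by linarith)
      rw [h1]; linarith
    have hsqrt_pos : 0 < Real.sqrt (1 - ε ^ 2) := Real.sqrt_pos.mpr hε2
    apply Real.log_le_log hsqrt_pos
    rw [← h2ab] at *
    linarith
  have : sInf ((fun l : ℝ => Real.log (p ^ l * q ^ (1 - l)
          + (1 - p) ^ l * (1 - q) ^ (1 - l))) '' Set.Icc 0 1) ≤
      sInf ((fun l : ℝ => Real.log (a ^ l * b ^ (1 - l) + b ^ l * a ^ (1 - l))) '' Set.Icc 0 1) := by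
    calc sInf _ ≤ _ := step1
      _ = Real.log (Real.sqrt (p * q) + Real.sqrt ((1 - p) * (1 - q))) := by rw [hval]
      _ ≤ Real.log (Real.sqrt (1 - ε ^ 2)) := step2
      _ ≤ _ := step3
  simpa [ha, hb] using neg_le_neg this
end

section
/- Let P₁, P₂ be probability distributions on a finite set S, and suppose there is an involution σ : S → S such that P₁(s) = P₂(σ(s)) and P₂(s) = P₁(σ(s)) for all s ∈ S. Then the Chernoff information C(P₁,P₂) = -min_{λ∈[0,1]} log(∑_{s∈S} P₁(s)^λ P₂(s)^(1-λ)) equals -log(∑_{s∈S} √(P₁(s)·P₂(s))); that is, the minimum over λ is attained at λ = 1/2. -/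
theorem chernoff_symmetric_distributions {S : Type*} [Fintype S]
    (P₁ P₂ : S → ℝ) (hP₁ : ∀ s, 0 ≤ P₁ s) (hP₂ : ∀ s, 0 ≤ P₂ s)
    (hsum₁ : ∑ s, P₁ s = 1) (hsum₂ : ∑ s, P₂ s = 1)
    (σ : S → S) (hinv : Function.Involutive σ)
    (hswap₁ : ∀ s, P₁ s = P₂ (σ s)) (hswap₂ : ∀ s, P₂ s = P₁ (σ s)) :
    IsLeast
      ((fun l : ℝ => Real.log (∑ s, P₁ s ^ l * P₂ s ^ (1 - l))) '' Set.Icc 0 1)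
      (Real.log (∑ s, Real.sqrt (P₁ s * P₂ s))) := by
  have hhalf : (∑ s, P₁ s ^ (1/2 : ℝ) * P₂ s ^ (1 - (1/2 : ℝ)))
      = ∑ s, Real.sqrt (P₁ s * P₂ s) := by
    apply Finset.sum_congr rfl
    intro s _
    rw [Real.sqrt_mul (hP₁ s), Real.sqrt_eq_rpow, Real.sqrt_eq_rpow]
    norm_num
  constructor
  · exact ⟨1/2, by norm_num, by simp only [hhalf]⟩
  · rintro x ⟨l, ⟨hl0, hl1⟩, rfl⟩
    simp only
    -- key inequality
    have hsym : ∑ s, P₁ s ^ (1-l) * P₂ s ^ l = ∑ s, P₁ s ^ l * P₂ s ^ (1-l) := by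
      rw [← Equiv.sum_comp (Function.Involutive.toPerm σ hinv)
        (fun s => P₁ s ^ l * P₂ s ^ (1-l))]
      apply Finset.sum_congr rfl
      intro s _
      simp only [Function.Involutive.coe_toPerm]
      rw [← hswap₂ s, ← hswap₁ s]
      ring
    have hterm : ∀ s, Real.sqrt (P₁ s * P₂ s)
        ≤ (P₁ s ^ l * P₂ s ^ (1-l) + P₁ s ^ (1-l) * P₂ s ^ l) / 2 := by
      intro s
      set a := P₁ s ^ l * P₂ s ^ (1-l) with ha_def
      set b := P₁ s ^ (1-l) * P₂ s ^ l with hb_def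
      have ha : 0 ≤ a := mul_nonneg (Real.rpow_nonneg (hP₁ s) _) (Real.rpow_nonneg (hP₂ s) _)
      have hb : 0 ≤ b := mul_nonneg (Real.rpow_nonneg (hP₁ s) _) (Real.rpow_nonneg (hP₂ s) _)
      have h1 : P₁ s ^ l * P₁ s ^ (1-l) = P₁ s := by
        rw [← Real.rpow_add' (hP₁ s) (by norm_num : l + (1-l) ≠ 0)]
        norm_num
      have h2 : P₂ s ^ (1-l) * P₂ s ^ l = P₂ s := by
        rw [← Real.rpow_add' (hP₂ s) (by norm_num : (1-l) + l ≠ 0)]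
        norm_num
      have hab : a * b = P₁ s * P₂ s := by
        rw [ha_def, hb_def]
        calc P₁ s ^ l * P₂ s ^ (1-l) * (P₁ s ^ (1-l) * P₂ s ^ l)
            = (P₁ s ^ l * P₁ s ^ (1-l)) * (P₂ s ^ (1-l) * P₂ s ^ l) := by ring
          _ = P₁ s * P₂ s := by rw [h1, h2]
      have hineq : a * b ≤ ((a+b)/2)^2 := by nlinarith [sq_nonneg (a - b)]
      calc Real.sqrt (P₁ s * P₂ s) = Real.sqrt (a * b) := by rw [hab]
        _ ≤ Real.sqrt (((a+b)/2)^2) := Real.sqrt_le_sqrt hineq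
        _ = (a+b)/2 := Real.sqrt_sq (by linarith)
    have key : ∑ s, Real.sqrt (P₁ s * P₂ s) ≤ ∑ s, P₁ s ^ l * P₂ s ^ (1-l) := by
      calc ∑ s, Real.sqrt (P₁ s * P₂ s)
          ≤ ∑ s, (P₁ s ^ l * P₂ s ^ (1-l) + P₁ s ^ (1-l) * P₂ s ^ l) / 2 :=
            Finset.sum_le_sum (fun s _ => hterm s)
        _ = ((∑ s, P₁ s ^ l * P₂ s ^ (1-l)) + ∑ s, P₁ s ^ (1-l) * P₂ s ^ l) / 2 := by
            rw [← Finset.sum_add_distrib, ← Finset.sum_div]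
        _ = ∑ s, P₁ s ^ l * P₂ s ^ (1-l) := by rw [hsym]; ring
    rcases eq_or_lt_of_le (Finset.sum_nonneg
        (fun s _ => Real.sqrt_nonneg (P₁ s * P₂ s))) with hzero | hpos
    · -- degenerate case: all products vanish
      have hprod : ∀ s : S, P₁ s * P₂ s = 0 := by
        intro s
        have := (Finset.sum_eq_zero_iff_of_nonneg
          (fun s _ => Real.sqrt_nonneg (P₁ s * P₂ s))).mp hzero.symm s (Finset.mem_univ s)
        have h0 : P₁ s * P₂ s ≤ 0 := by
          by_contra h
          push_neg at h
          exact absurd this (ne_of_gt (Real.sqrt_pos.mpr h))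
        exact le_antisymm h0 (mul_nonneg (hP₁ s) (hP₂ s))
      rw [← hzero, Real.log_zero]
      rcases eq_or_lt_of_le hl0 with h0 | h0
      · have : ∑ s, P₁ s ^ l * P₂ s ^ (1-l) = 1 := by
          rw [← h0]
          simp only [Real.rpow_zero, sub_zero, Real.rpow_one, one_mul]
          exact hsum₂
        rw [this, Real.log_one]
      · rcases eq_or_lt_of_le hl1 with h1 | h1
        · have : ∑ s, P₁ s ^ l * P₂ s ^ (1-l) = 1 := by
            rw [h1]
            simp only [sub_self, Real.rpow_zero, Real.rpow_one, mul_one]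
            exact hsum₁
          rw [this, Real.log_one]
        · have : ∑ s, P₁ s ^ l * P₂ s ^ (1-l) = 0 := by
            apply Finset.sum_eq_zero
            intro s _
            rcases mul_eq_zero.mp (hprod s) with h | h
            · rw [h, Real.zero_rpow (ne_of_gt h0), zero_mul]
            · rw [h, Real.zero_rpow (by linarith : (1:ℝ) - l ≠ 0), mul_zero]
          rw [this, Real.log_zero]
    · exact Real.log_le_log hpos key
end

section
/- Let g(x) = log(x/(1-x)) on (0,1). For any p ∈ (0, 1/2), the chord of g from (p, g(p)) to (1-p, g(1-p)) lies below the graph of g on the interval [p, 1/2]; i.e., for x ∈ [p, 1/2], the line through those two points evaluated at x is at most g(x). -/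
/-!
The logit is concave on `(0, 1/2]`, since its derivative `1/x + 1/(1-x)` decreases there, and it
is odd about `1/2`. Hence the chord from `p` to `1 - p` passes through `(1/2, 0) = (1/2, logit (1/2))`,
so on `[p, 1/2]` it is the chord of a concave function between `p` and `1/2`, which lies below the
graph.
-/

open Real Set

theorem ConcaveOn.secant_le {𝕜 : Type*} [Field 𝕜] [LinearOrder 𝕜] [IsStrictOrderedRing 𝕜]
    {s : Set 𝕜} {f : 𝕜 → 𝕜} (hf : ConcaveOn 𝕜 s f) {a b x : 𝕜} (ha : a ∈ s) (hb : b ∈ s)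
    (hx : x ∈ Icc a b) : f a + (x - a) * (f b - f a) / (b - a) ≤ f x := by
  rcases (hx.1.trans hx.2).eq_or_lt with rfl | hab
  · simp [le_antisymm hx.2 hx.1]
  · have hba : 0 < b - a := sub_pos.2 hab
    have key := hf.2 ha hb (div_nonneg (sub_nonneg.2 hx.2) hba.le)
      (div_nonneg (sub_nonneg.2 hx.1) hba.le) (by field)
    have hcomb : ((b - x) / (b - a)) • a + ((x - a) / (b - a)) • b = x := by
      simp only [smul_eq_mul]; field
    rw [hcomb] at key
    simp only [smul_eq_mul] at key
    convert key using 1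
    field

noncomputable def logit (x : ℝ) : ℝ := log (x / (1 - x))

lemma logit_half : logit (1 / 2) = 0 := by norm_num [logit]

lemma logit_one_sub (x : ℝ) : logit (1 - x) = -logit x := by
  rw [logit, logit, sub_sub_cancel, ← log_inv, inv_div]

lemma hasDerivAt_logit {x : ℝ} (hx₀ : 0 < x) (hx₁ : x < 1) :
    HasDerivAt logit (x⁻¹ + (1 - x)⁻¹) x := by
  have h1x : 1 - x ≠ 0 := by linarith
  have hdiv := (hasDerivAt_id' x).div ((hasDerivAt_id' x).const_sub 1) h1x
  refine (hdiv.log (div_ne_zero hx₀.ne' h1x)).congr_deriv ?_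
  simp only [Pi.div_apply]
  field

lemma hasDerivAt_inv_add_inv_one_sub {x : ℝ} (hx₀ : 0 < x) (hx₁ : x < 1) :
    HasDerivAt (fun y : ℝ => y⁻¹ + (1 - y)⁻¹) (-(x ^ 2)⁻¹ + ((1 - x) ^ 2)⁻¹) x := by
  have h1x : 1 - x ≠ 0 := by linarith
  refine ((hasDerivAt_inv hx₀.ne').add (((hasDerivAt_id' x).const_sub 1).inv h1x)).congr_deriv ?_
  field_simp

lemma concaveOn_logit : ConcaveOn ℝ (Ioc 0 (1 / 2)) logit := by
  refine concaveOn_of_hasDerivWithinAt2_nonpos (f' := fun y => y⁻¹ + (1 - y)⁻¹)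
    (f'' := fun y => -(y ^ 2)⁻¹ + ((1 - y) ^ 2)⁻¹) (convex_Ioc 0 (1 / 2))
    (fun x hx => (hasDerivAt_logit hx.1 (by linarith [hx.2])).continuousAt.continuousWithinAt)
    (fun x hx => ?_) (fun x hx => ?_) (fun x hx => ?_) <;>
  rw [interior_Ioc] at hx
  · exact (hasDerivAt_logit hx.1 (by linarith [hx.2])).hasDerivWithinAt
  · exact (hasDerivAt_inv_add_inv_one_sub hx.1 (by linarith [hx.2])).hasDerivWithinAt
  · have hsq : x ^ 2 ≤ (1 - x) ^ 2 := pow_le_pow_left₀ hx.1.le (by linarith [hx.2]) 2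
    have := inv_anti₀ (pow_pos hx.1 2) hsq
    linarith

theorem logit_chord_below_graph (p x : ℝ) (hp : p ∈ Set.Ioo (0:ℝ) (1/2))
    (hx : x ∈ Set.Icc p (1/2)) :
    Real.log (p / (1 - p)) +
      (x - p) * (Real.log ((1 - p) / p) - Real.log (p / (1 - p))) / ((1 - p) - p)
    ≤ Real.log (x / (1 - x)) := by
  have hsecant := concaveOn_logit.secant_le ⟨hp.1, hp.2.le⟩ ⟨by norm_num, le_rfl⟩ hx
  rw [logit_half] at hsecant
  have h12p : 1 - 2 * p ≠ 0 := by linarith [hp.2]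
  have hanti : log ((1 - p) / p) = -logit p := by rw [← logit_one_sub, logit, sub_sub_cancel]
  rw [hanti]
  change logit p + (x - p) * (-logit p - logit p) / ((1 - p) - p) ≤ logit x
  calc logit p + (x - p) * (-logit p - logit p) / ((1 - p) - p)
      = logit p + (x - p) * (0 - logit p) / (1 / 2 - p) := by field
    _ ≤ logit x := hsecant
end

section
/- Let N = 2n be even, f ∈ [0,1/2), and η_{N} = (1-2f)/N, η_{N-1} = (1-2f)/(N-1). Then the Chernoff information between Bernoulli(1/2) and Bernoulli(1/2 - η_N) is at most -log(((N-1)/N)·√(1-η_{N-1}²) + 1/N). -/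
/-!
Write `Bernoulli(1/2)` and `Bernoulli(1/2 - η)` as coarse-grainings of the distributions
`P = (x, y, x', z)` and `Q = (x, z, x', y)` on four points. By Hölder's inequality the Chernoff
coefficient `∑ pᵢ^λ qᵢ^(1-λ)` can only grow under coarse-graining, and for `P, Q` it is
`x + x' + y^λ z^(1-λ) + z^λ y^(1-λ) ≥ x + x' + 2√(yz)` by AM-GM, uniformly in `λ`.
With `t = 1 - 2f`, the choice `x = (1-t)/(2N)`, `x' = (1+t)/(2N)`, `y, z = (N-1 ± t)/(2N)` turns
this bound into `((N-1)/N) √(1 - η_{N-1}²) + 1/N`.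
-/

open Finset Real

theorem rpow_mul_rpow_one_sub {x : ℝ} (hx : 0 ≤ x) (l : ℝ) : x ^ l * x ^ (1 - l) = x := by
  rw [← rpow_add' hx (by simp), add_sub_cancel, rpow_one]

theorem Finset.sum_rpow_mul_rpow_le {ι : Type*} (s : Finset ι) {a c : ι → ℝ}
    (ha : ∀ i ∈ s, 0 ≤ a i) (hc : ∀ i ∈ s, 0 ≤ c i) {l : ℝ} (hl₀ : 0 ≤ l) (hl₁ : l ≤ 1) :
    ∑ i ∈ s, a i ^ l * c i ^ (1 - l) ≤ (∑ i ∈ s, a i) ^ l * (∑ i ∈ s, c i) ^ (1 - l) := by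
  rcases hl₀.eq_or_lt with rfl | hl₀
  · simp
  rcases hl₁.eq_or_lt with rfl | hl₁
  · simp
  have hl₁' : 1 - l ≠ 0 := by linarith
  convert inner_le_Lp_mul_Lq_of_nonneg s (HolderConjugate.inv_one_sub_inv hl₀ hl₁)
    (fun i hi => rpow_nonneg (ha i hi) l) (fun i hi => rpow_nonneg (hc i hi) (1 - l)) using 3
  · exact (sum_congr rfl fun i hi => rpow_rpow_inv (ha i hi) hl₀.ne').symm
  · simp
  · exact (sum_congr rfl fun i hi => rpow_rpow_inv (hc i hi) hl₁').symm
  · simp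

theorem two_mul_sqrt_mul_le_rpow_mul_rpow_add_rpow_mul_rpow {y z : ℝ} (hy : 0 ≤ y) (hz : 0 ≤ z)
    (l : ℝ) : 2 * √(y * z) ≤ y ^ l * z ^ (1 - l) + z ^ l * y ^ (1 - l) := by
  have hu : 0 ≤ y ^ l * z ^ (1 - l) := by positivity
  have hv : 0 ≤ z ^ l * y ^ (1 - l) := by positivity
  have hprod : y ^ l * z ^ (1 - l) * (z ^ l * y ^ (1 - l)) = y * z := by
    calc _ = y ^ l * y ^ (1 - l) * (z ^ l * z ^ (1 - l)) := by ring
      _ = y * z := by rw [rpow_mul_rpow_one_sub hy, rpow_mul_rpow_one_sub hz]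
  rw [← hprod, sqrt_mul hu]
  nlinarith [sq_sqrt hu, sq_sqrt hv, sq_nonneg (√(y ^ l * z ^ (1 - l)) - √(z ^ l * y ^ (1 - l)))]

theorem rpow_mul_rpow_add_rpow_mul_rpow_le {a b c d : ℝ} (ha : 0 ≤ a) (hb : 0 ≤ b) (hc : 0 ≤ c)
    (hd : 0 ≤ d) {l : ℝ} (hl₀ : 0 ≤ l) (hl₁ : l ≤ 1) :
    a ^ l * c ^ (1 - l) + b ^ l * d ^ (1 - l) ≤ (a + b) ^ l * (c + d) ^ (1 - l) := by
  simpa [Fin.sum_univ_two] using Finset.sum_rpow_mul_rpow_le univ (a := ![a, b]) (c := ![c, d])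
    (by simp [Fin.forall_fin_two, ha, hb]) (by simp [Fin.forall_fin_two, hc, hd]) hl₀ hl₁

noncomputable def bernoulliChernoffCoeff (p q l : ℝ) : ℝ :=
  p ^ l * q ^ (1 - l) + (1 - p) ^ l * (1 - q) ^ (1 - l)

theorem add_add_two_mul_sqrt_le_bernoulliChernoffCoeff {x x' y z : ℝ} (hx : 0 ≤ x) (hx' : 0 ≤ x')
    (hy : 0 ≤ y) (hz : 0 ≤ z) (hsum : x + y + (x' + z) = 1) {l : ℝ} (hl₀ : 0 ≤ l) (hl₁ : l ≤ 1) :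
    x + x' + 2 * √(y * z) ≤ bernoulliChernoffCoeff (x + y) (x + z) l := by
  have h₁ := rpow_mul_rpow_add_rpow_mul_rpow_le hx hy hx hz hl₀ hl₁
  have h₂ := rpow_mul_rpow_add_rpow_mul_rpow_le hx' hz hx' hy hl₀ hl₁
  have hcross := two_mul_sqrt_mul_le_rpow_mul_rpow_add_rpow_mul_rpow hy hz l
  rw [rpow_mul_rpow_one_sub hx] at h₁
  rw [rpow_mul_rpow_one_sub hx'] at h₂
  rw [bernoulliChernoffCoeff, show 1 - (x + y) = x' + z by linarith,
    show 1 - (x + z) = x' + y by linarith]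
  linarith

theorem le_bernoulliChernoffCoeff_half {N t : ℝ} (hN : 2 ≤ N) (ht : |t| ≤ 1) {l : ℝ}
    (hl₀ : 0 ≤ l) (hl₁ : l ≤ 1) :
    (N - 1) / N * √(1 - (t / (N - 1)) ^ 2) + 1 / N ≤
      bernoulliChernoffCoeff (1 / 2) (1 / 2 - t / N) l := by
  obtain ⟨ht₀, ht₁⟩ := abs_le.mp ht
  have hN₀ : 0 < N := by linarith
  have hN₁ : 0 < N - 1 := by linarith
  have key := add_add_two_mul_sqrt_le_bernoulliChernoffCoeff
    (x := (1 - t) / (2 * N)) (x' := (1 + t) / (2 * N)) (y := (N - 1 + t) / (2 * N))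
    (z := (N - 1 - t) / (2 * N)) (div_nonneg (by linarith) (by positivity))
    (div_nonneg (by linarith) (by positivity)) (div_nonneg (by linarith) (by positivity))
    (div_nonneg (by linarith) (by positivity)) (by field_simp; ring) hl₀ hl₁
  rw [show (1 - t) / (2 * N) + (N - 1 + t) / (2 * N) = 1 / 2 by field_simp; ring,
    show (1 - t) / (2 * N) + (N - 1 - t) / (2 * N) = 1 / 2 - t / N by field_simp; ring] at key
  have hyz : (N - 1 + t) / (2 * N) * ((N - 1 - t) / (2 * N)) =
      ((N - 1) / (2 * N)) ^ 2 * (1 - (t / (N - 1)) ^ 2) := by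
    field_simp; ring
  calc (N - 1) / N * √(1 - (t / (N - 1)) ^ 2) + 1 / N
      = (1 - t) / (2 * N) + (1 + t) / (2 * N) +
          2 * √((N - 1 + t) / (2 * N) * ((N - 1 - t) / (2 * N))) := by
        rw [hyz, sqrt_mul (sq_nonneg _), sqrt_sq (by positivity)]
        field_simp; ring
    _ ≤ _ := key

theorem chernoff_upper_bound_even (n : ℕ) (hn : 1 ≤ n) (f : ℝ)
    (hf0 : 0 ≤ f) (hf1 : f < 1/2) (N ηN ηN1 : ℝ)
    (hN : N = 2 * n) (hηN : ηN = (1 - 2 * f) / N) (hηN1 : ηN1 = (1 - 2 * f) / (N - 1)) :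
    -sInf ((fun l : ℝ => Real.log ((1/2 : ℝ) ^ l * (1/2 - ηN) ^ (1 - l)
        + (1 - 1/2 : ℝ) ^ l * (1 - (1/2 - ηN)) ^ (1 - l))) '' Set.Icc 0 1) ≤
    -Real.log ((N - 1) / N * Real.sqrt (1 - ηN1 ^ 2) + 1 / N) := by
  have hN₂ : 2 ≤ N := by
    have : (1 : ℝ) ≤ n := mod_cast hn
    linarith
  have ht : |1 - 2 * f| ≤ 1 := abs_le.mpr ⟨by linarith, by linarith⟩
  subst hηN hηN1
  have hpos : 0 < (N - 1) / N * √(1 - ((1 - 2 * f) / (N - 1)) ^ 2) + 1 / N := by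
    have : 0 ≤ N - 1 := by linarith
    positivity
  refine neg_le_neg (le_csInf ((Set.nonempty_Icc.mpr zero_le_one).image _) ?_)
  rintro _ ⟨l, ⟨hl₀, hl₁⟩, rfl⟩
  exact log_le_log hpos (le_bernoulliChernoffCoeff_half hN₂ ht hl₀ hl₁)
end

section
/- Let p ∈ (1/2 - ε, (1-ε)/2) with 0 < ε < 1, q = p + ε, and let λ* ∈ [0,1] satisfy log(p/(p+ε))·p^{λ*}(p+ε)^{1-λ*} = log((1-p-ε)/(1-p))·(1-p)^{λ*}(1-p-ε)^{1-λ*} (the stationarity condition for the λ-Chernoff coefficient between Bernoulli(p) and Bernoulli(q)). Then λ* ≤ 1/2. -/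
/-!
Put `q = p + ε`, `a = log (q / p)` and `b = log ((1 - p) / (1 - q))`, both positive. After taking
logarithms, stationarity says that `λ` is the zero of the affine function
`λ ↦ log a - log b + λ log (p / (1 - p)) + (1 - λ) log (q / (1 - q))`, whose slope `-(a + b)` is
negative. Its value at `1/2` is `≤ 0` exactly when `p q a² ≤ (1 - p) (1 - q) b²`, and this holds
because `t ↦ t (t + ε) log² (1 + ε / t)` is increasing (by `log (1 + x) ≥ 2x / (2 + x)`) and
`p ≤ 1 - q`.

For `p ≤ 0` the hypothesis is read through the conventions `log x = log |x|` and
`x ^ λ = |x| ^ λ cos (π λ)` for `x < 0`: the left side is then `≥ 0` for `λ ∈ (1/2, 1]`, while the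
right side is negative.
-/

open Real Set

lemma two_mul_div_le_log_add_sub_log {t ε : ℝ} (ht : 0 < t) (hε : 0 ≤ ε) :
    2 * ε / (2 * t + ε) ≤ log (t + ε) - log t := by
  calc 2 * ε / (2 * t + ε) = 2 * (ε / t) / (ε / t + 2) := by field_simp; ring
    _ ≤ log (1 + ε / t) := le_log_one_add_of_nonneg (div_nonneg hε ht.le)
    _ = log (t + ε) - log t := by rw [← log_div (by positivity) ht.ne']; congr 1; field_simp

lemma hasDerivAt_mul_mul_log_sub_sq {t : ℝ} (ε : ℝ) (ht : 0 < t) (htε : 0 < t + ε) :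
    HasDerivAt (fun s => s * (s + ε) * (log (s + ε) - log s) ^ 2)
      ((log (t + ε) - log t) * ((2 * t + ε) * (log (t + ε) - log t) - 2 * ε)) t := by
  have hlog : HasDerivAt (fun s => log (s + ε) - log s) (1 / (t + ε) - t⁻¹) t :=
    (((hasDerivAt_id' t).add_const ε).log htε.ne').sub (hasDerivAt_log ht.ne')
  refine (((hasDerivAt_id' t).mul ((hasDerivAt_id' t).add_const ε)).mul (hlog.pow 2)).congr_deriv ?_
  simp only [Pi.mul_apply, Pi.pow_apply]
  field_simp
  ring

lemma monotoneOn_mul_mul_log_sub_sq {ε : ℝ} (hε : 0 ≤ ε) :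
    MonotoneOn (fun t => t * (t + ε) * (log (t + ε) - log t) ^ 2) (Ioi 0) := by
  have hderiv : ∀ t ∈ Ioi (0 : ℝ), HasDerivAt (fun s => s * (s + ε) * (log (s + ε) - log s) ^ 2)
      ((log (t + ε) - log t) * ((2 * t + ε) * (log (t + ε) - log t) - 2 * ε)) t :=
    fun t ht => hasDerivAt_mul_mul_log_sub_sq ε ht (by linarith [mem_Ioi.1 ht])
  refine monotoneOn_of_hasDerivWithinAt_nonneg (convex_Ioi 0)
    (f' := fun t => (log (t + ε) - log t) * ((2 * t + ε) * (log (t + ε) - log t) - 2 * ε))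
    (fun t ht => (hderiv t ht).continuousAt.continuousWithinAt) ?_ ?_
  · rw [interior_Ioi]
    exact fun t ht => (hderiv t ht).hasDerivWithinAt
  · rw [interior_Ioi]
    intro t ht
    have hL := two_mul_div_le_log_add_sub_log ht hε
    have hpos : 0 < 2 * t + ε := by linarith [mem_Ioi.1 ht]
    exact mul_nonneg ((div_nonneg (by linarith) hpos.le).trans hL)
      (sub_nonneg.2 (by rw [div_le_iff₀ hpos] at hL; linarith))

lemma log_mul_rpow_mul_rpow {c x y : ℝ} (hc : 0 < c) (hx : 0 < x) (hy : 0 < y) (a b : ℝ) :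
    log (c * (x ^ a * y ^ b)) = log c + a * log x + b * log y := by
  rw [log_mul hc.ne' (by positivity), log_mul (by positivity) (by positivity), log_rpow hx,
    log_rpow hy, add_assoc]

lemma rpow_nonpos_of_nonpos {x y : ℝ} (hx : x ≤ 0) (hy₁ : 1 / 2 < y) (hy₂ : y < 3 / 2) :
    x ^ y ≤ 0 := by
  rcases hx.lt_or_eq with hx | rfl
  · rw [rpow_def_of_neg hx]
    exact mul_nonpos_of_nonneg_of_nonpos (exp_pos _).le
      (cos_neg_of_pi_div_two_lt_of_lt (by nlinarith [pi_pos]) (by nlinarith [pi_pos])).le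
  · exact (zero_rpow (by linarith)).le

theorem stationary_point_le_half_of_pos {p q l : ℝ} (hp : 0 < p) (hpq : p < q) (hpq1 : p + q ≤ 1)
    (hstat : log (p / q) * p ^ l * q ^ (1 - l)
      = log ((1 - q) / (1 - p)) * (1 - p) ^ l * (1 - q) ^ (1 - l)) :
    l ≤ 1 / 2 := by
  have hq : 0 < q := hp.trans hpq
  have h1q : 0 < 1 - q := by linarith
  have h1p : 0 < 1 - p := by linarith
  set a := log q - log p with ha_def
  set b := log (1 - p) - log (1 - q) with hb_def
  have ha : 0 < a := sub_pos.2 (log_lt_log hp hpq)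
  have hb : 0 < b := sub_pos.2 (log_lt_log h1q (by linarith))
  have hstat' : a * (p ^ l * q ^ (1 - l)) = b * ((1 - p) ^ l * (1 - q) ^ (1 - l)) := by
    rw [log_div hp.ne' hq.ne', log_div h1q.ne' h1p.ne'] at hstat
    linear_combination -hstat
  have hlog_stat := congrArg log hstat'
  rw [log_mul_rpow_mul_rpow ha hp hq, log_mul_rpow_mul_rpow hb h1p h1q] at hlog_stat
  have hkey : p * q * a ^ 2 ≤ (1 - q) * (1 - p) * b ^ 2 := by
    simpa only [add_sub_cancel, sub_add_sub_cancel] using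
      monotoneOn_mul_mul_log_sub_sq (sub_nonneg.2 hpq.le) hp (show 1 - q ∈ Ioi 0 from h1q)
        (by linarith : p ≤ 1 - q)
  have hlog_key := log_le_log (by positivity) hkey
  rw [log_mul (by positivity) (by positivity), log_mul hp.ne' hq.ne', log_pow,
    log_mul (by positivity) (by positivity), log_mul h1q.ne' h1p.ne', log_pow,
    Nat.cast_ofNat] at hlog_key
  have hslope : (2 * l - 1) * (a + b) ≤ 0 := by rw [ha_def, hb_def]; linarith
  linarith [nonpos_of_mul_nonpos_left hslope (by positivity)]

theorem stationary_point_le_half_of_nonpos {p q l : ℝ} (hp : p ≤ 0) (hpq : -p < q) (hq1 : q < 1)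
    (hl : l ≤ 1)
    (hstat : log (p / q) * p ^ l * q ^ (1 - l)
      = log ((1 - q) / (1 - p)) * (1 - p) ^ l * (1 - q) ^ (1 - l)) :
    l ≤ 1 / 2 := by
  by_contra! hl_half
  have hq : 0 < q := by linarith
  have hlog_left : log (p / q) ≤ 0 := by
    rw [← log_abs]
    refine log_nonpos (abs_nonneg _) ?_
    rw [abs_div, abs_of_pos hq, abs_of_nonpos hp, div_le_one hq]
    exact hpq.le
  have hlog_right : log ((1 - q) / (1 - p)) < 0 :=
    log_neg (div_pos (by linarith) (by linarith)) ((div_lt_one (by linarith)).2 (by linarith))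
  have hleft : 0 ≤ log (p / q) * p ^ l * q ^ (1 - l) :=
    mul_nonneg (mul_nonneg_of_nonpos_of_nonpos hlog_left
      (rpow_nonpos_of_nonpos hp hl_half (by linarith))) (rpow_pos_of_pos hq _).le
  have hright : log ((1 - q) / (1 - p)) * (1 - p) ^ l * (1 - q) ^ (1 - l) < 0 :=
    mul_neg_of_neg_of_pos (mul_neg_of_neg_of_pos hlog_right (rpow_pos_of_pos (by linarith) _))
      (rpow_pos_of_pos (by linarith) _)
  linarith

theorem stationary_point_le_half_general (p ε l : ℝ) (hε1 : ε < 1)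
    (hp1 : 1/2 - ε < p) (hp2 : p < (1 - ε) / 2)
    (hl1 : l ≤ 1)
    (hstat : Real.log (p / (p + ε)) * p ^ l * (p + ε) ^ (1 - l)
      = Real.log ((1 - p - ε) / (1 - p)) * (1 - p) ^ l * (1 - p - ε) ^ (1 - l)) :
    l ≤ 1/2 := by
  rw [sub_sub] at hstat
  rcases le_or_gt p 0 with hp | hp
  · exact stationary_point_le_half_of_nonpos hp (by linarith) (by linarith) hl1 hstat
  · exact stationary_point_le_half_of_pos hp (by linarith) (by linarith) hstat

theorem stationary_point_le_half (p ε l : ℝ) (hε0 : 0 < ε) (hε1 : ε < 1)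
    (hp1 : 1/2 - ε < p) (hp2 : p < (1 - ε) / 2)
    (hl0 : 0 ≤ l) (hl1 : l ≤ 1)
    (hstat : Real.log (p / (p + ε)) * p ^ l * (p + ε) ^ (1 - l)
      = Real.log ((1 - p - ε) / (1 - p)) * (1 - p) ^ l * (1 - p - ε) ^ (1 - l)) :
    l ≤ 1/2 :=
  stationary_point_le_half_general p ε l hε1 hp1 hp2 hl1 hstat
end
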